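/- arXiv:2206.12819 — 5 statements merged into one kernel-verified Lean document; each statement's English description precedes it below -/
import Mathlib

section
/- Let 𝓕 be an ω-closed family of nonempty inductive subsets of ω, and let B_ℤ^𝓕 = ℤ × ℤ × 𝓕 with operation (i₁,j₁,F₁)·(i₂,j₂,F₂) = (i₁-j₁+i₂, j₂, (j₁-i₂+F₁) ∩ F₂) if j₁ ≤ i₂, and (i₁, j₁-i₂+j₂, F₁ ∩ (i₂-j₁+F₂)) if j₁ ≥ i₂. Then this operation is associative. -/
/-!
Nonempty inductive subsets of ω are the rays `[a)`. Shifting a ray by an integer and intersecting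
two rays again gives a ray, so with `m = max j₁ i₂` both branches of the operation take the same
closed form
`(i₁, j₁, [a)) · (i₂, j₂, [b)) = (i₁ - j₁ + m, j₂ - i₂ + m, [max (a + j₁) (b + i₂) - m))`.
Associativity then reduces to an identity between max-plus expressions in the integers.
-/

/-- A subset of ω is inductive if `i ∈ F` implies `i+1 ∈ F`. -/
def SInd (F : Set ℕ) : Prop := ∀ i ∈ F, i + 1 ∈ F

/-- `-n + F = {k : k + n ∈ F}`. -/
def negShift (n : ℕ) (F : Set ℕ) : Set ℕ := {k : ℕ | k + n ∈ F}

/-- A family of subsets of ω is ω-closed. -/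
def OmegaClosed (𝓕 : Set (Set ℕ)) : Prop :=
  ∀ n : ℕ, ∀ F₁ ∈ 𝓕, ∀ F₂ ∈ 𝓕, F₁ ∩ negShift n F₂ ∈ 𝓕

/-- `m + F = {m + k : k ∈ F} ∩ ω` for `m : ℤ`. -/
def zshift (m : ℤ) (F : Set ℕ) : Set ℕ := {x : ℕ | ∃ k ∈ F, (x : ℤ) = m + k}

/-- The semigroup operation on `B_ℤ^𝓕 ⊆ ℤ × ℤ × Set ℕ`. -/
def BZFop (a b : ℤ × ℤ × Set ℕ) : ℤ × ℤ × Set ℕ :=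
  if a.2.1 ≤ b.1 then
    (a.1 - a.2.1 + b.1, b.2.1, zshift (a.2.1 - b.1) a.2.2 ∩ b.2.2)
  else
    (a.1, a.2.1 - b.1 + b.2.1, a.2.2 ∩ zshift (b.1 - a.2.1) b.2.2)

def natIci (a : ℤ) : Set ℕ := (↑) ⁻¹' Set.Ici a

theorem natIci_natCast (n : ℕ) : natIci n = Set.Ici n := by
  ext x
  simp [natIci]

theorem natIci_inter_natIci (a b : ℤ) : natIci a ∩ natIci b = natIci (max a b) := by
  rw [natIci, natIci, ← Set.preimage_inter, Set.Ici_inter_Ici, natIci]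

theorem zshift_natIci (m : ℤ) {a : ℤ} (ha : 0 ≤ a) : zshift m (natIci a) = natIci (m + a) := by
  ext x
  simp only [zshift, natIci, Set.mem_preimage, Set.mem_Ici]
  constructor
  · rintro ⟨k, hk, hx⟩
    omega
  · intro hx
    exact ⟨(x - m).toNat, by omega, by omega⟩

theorem SInd.eq_Ici_sInf {F : Set ℕ} (hne : F.Nonempty) (hF : SInd F) : F = Set.Ici (sInf F) :=
  Set.Subset.antisymm (fun _ hx => Nat.sInf_le hx)
    (fun _ hx => Nat.le_induction (Nat.sInf_mem hne) (fun n _ hn => hF n hn) _ hx)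

theorem SInd.exists_eq_natIci {F : Set ℕ} (hne : F.Nonempty) (hF : SInd F) :
    ∃ a : ℕ, F = natIci a :=
  ⟨sInf F, by rw [natIci_natCast]; exact hF.eq_Ici_sInf hne⟩

theorem BZFop_natIci (i₁ j₁ i₂ j₂ : ℤ) {a b : ℤ} (ha : 0 ≤ a) (hb : 0 ≤ b) :
    BZFop (i₁, j₁, natIci a) (i₂, j₂, natIci b) =
      (i₁ - j₁ + max j₁ i₂, j₂ - i₂ + max j₁ i₂,
        natIci (max (a + j₁) (b + i₂) - max j₁ i₂)) := by
  unfold BZFop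
  dsimp only
  split_ifs with h
  · rw [zshift_natIci _ ha, natIci_inter_natIci, Prod.mk.injEq, Prod.mk.injEq]
    exact ⟨by omega, by omega, congrArg natIci (by omega)⟩
  · rw [zshift_natIci _ hb, natIci_inter_natIci, Prod.mk.injEq, Prod.mk.injEq]
    exact ⟨by omega, by omega, congrArg natIci (by omega)⟩

theorem stmt7_general (𝓕 : Set (Set ℕ))
    (hmem : ∀ F ∈ 𝓕, F.Nonempty ∧ SInd F) :
    ∀ a b c : ℤ × ℤ × Set ℕ, a.2.2 ∈ 𝓕 → b.2.2 ∈ 𝓕 → c.2.2 ∈ 𝓕 →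
      BZFop (BZFop a b) c = BZFop a (BZFop b c) := by
  rintro ⟨i₁, j₁, F₁⟩ ⟨i₂, j₂, F₂⟩ ⟨i₃, j₃, F₃⟩ h₁ h₂ h₃
  obtain ⟨a₁, rfl⟩ := (hmem F₁ h₁).2.exists_eq_natIci (hmem F₁ h₁).1
  obtain ⟨a₂, rfl⟩ := (hmem F₂ h₂).2.exists_eq_natIci (hmem F₂ h₂).1
  obtain ⟨a₃, rfl⟩ := (hmem F₃ h₃).2.exists_eq_natIci (hmem F₃ h₃).1
  rw [BZFop_natIci i₁ j₁ i₂ j₂ (by positivity) (by positivity),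
    BZFop_natIci _ _ i₃ j₃ (by omega) (by positivity),
    BZFop_natIci i₂ j₂ i₃ j₃ (by positivity) (by positivity),
    BZFop_natIci i₁ j₁ _ _ (by positivity) (by omega), Prod.mk.injEq, Prod.mk.injEq]
  exact ⟨by omega, by omega, congrArg natIci (by omega)⟩

/-- For an ω-closed family `𝓕` of nonempty inductive subsets of ω, the
operation of `B_ℤ^𝓕` is associative. -/
theorem stmt7 (𝓕 : Set (Set ℕ)) (hcl : OmegaClosed 𝓕)
    (hmem : ∀ F ∈ 𝓕, F.Nonempty ∧ SInd F) :
    ∀ a b c : ℤ × ℤ × Set ℕ, a.2.2 ∈ 𝓕 → b.2.2 ∈ 𝓕 → c.2.2 ∈ 𝓕 →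
      BZFop (BZFop a b) c = BZFop a (BZFop b c) :=
  stmt7_general 𝓕 hmem
end

section
/- In the semigroup B_ℤ^𝓕 with 𝓕 an ω-closed family of nonempty inductive subsets of ω, every element (i,j,F) has a unique inverse in the sense of inverse semigroups, namely (j,i,F): (i,j,F)·(j,i,F)·(i,j,F) = (i,j,F) and (j,i,F)·(i,j,F)·(j,i,F) = (j,i,F), and no other element has these two properties. -/
/- The first two coordinates multiply as in the bicyclic-type monoid on `ℤ × ℤ`:
`(a, b) · (c, d) = (a - b + max b c, d - c + max b c)`. From `x y x = x` one reads off
`y.1 - y.2 = x.2 - x.1` and `y.1 ≤ x.2`, and from `y x y = y` the reverse bound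
`x.1 ≤ y.2`, which together pin `y` down to `(j, i, G)`. Then both products have
matching middle indices, so they reduce to intersections, and `F ∩ G = F = G`. -/

theorem zshift_zero (S : Set ℕ) : zshift 0 S = S := by
  ext x
  simp [zshift]

theorem BZFop_fst (x y : ℤ × ℤ × Set ℕ) :
    (BZFop x y).1 = x.1 - x.2.1 + max x.2.1 y.1 := by
  unfold BZFop
  split_ifs <;> simp only [] <;> omega

theorem BZFop_snd_fst (x y : ℤ × ℤ × Set ℕ) :
    (BZFop x y).2.1 = y.2.1 - y.1 + max x.2.1 y.1 := by
  unfold BZFop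
  split_ifs <;> simp only [] <;> omega

theorem BZFop_of_snd_eq_fst (a b c : ℤ) (S T : Set ℕ) :
    BZFop (a, b, S) (b, c, T) = (a, c, S ∩ T) := by
  simp [BZFop, zshift_zero]

theorem indices_of_BZFop_BZFop_eq {x y : ℤ × ℤ × Set ℕ} (h : BZFop (BZFop x y) x = x) :
    y.1 - y.2.1 = x.2.1 - x.1 ∧ y.1 ≤ x.2.1 := by
  have h₁ := congrArg Prod.fst h
  have h₂ := congrArg (fun z => z.2.1) h
  simp only [BZFop_fst, BZFop_snd_fst] at h₁ h₂
  omega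

theorem stmt9_general (𝓕 : Set (Set ℕ))
    (i j : ℤ) (F : Set ℕ) :
    BZFop (BZFop (i, j, F) (j, i, F)) (i, j, F) = (i, j, F) ∧
    BZFop (BZFop (j, i, F) (i, j, F)) (j, i, F) = (j, i, F) ∧
    ∀ y : ℤ × ℤ × Set ℕ, y.2.2 ∈ 𝓕 →
      BZFop (BZFop (i, j, F) y) (i, j, F) = (i, j, F) →
      BZFop (BZFop y (i, j, F)) y = y →
      y = (j, i, F) := by
  refine ⟨by simp only [BZFop_of_snd_eq_fst, Set.inter_self],
    by simp only [BZFop_of_snd_eq_fst, Set.inter_self], ?_⟩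
  rintro ⟨p, q, G⟩ - h₁ h₂
  obtain ⟨hshift, hpj⟩ := indices_of_BZFop_BZFop_eq h₁
  obtain ⟨-, hiq⟩ := indices_of_BZFop_BZFop_eq h₂
  obtain ⟨rfl, rfl⟩ : p = j ∧ q = i := by dsimp only at *; omega
  simp only [BZFop_of_snd_eq_fst, Set.inter_right_comm F G, Set.inter_right_comm G F,
    Set.inter_self, Prod.mk.injEq, true_and, Set.inter_eq_left] at h₁ h₂
  rw [Set.Subset.antisymm h₂ h₁]

/-- In `B_ℤ^𝓕`, the element `(i,j,F)` has `(j,i,F)` as its unique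
inverse in the sense of inverse semigroups. -/
theorem stmt9 (𝓕 : Set (Set ℕ)) (hcl : OmegaClosed 𝓕)
    (hmem : ∀ F ∈ 𝓕, F.Nonempty ∧ SInd F)
    (i j : ℤ) (F : Set ℕ) (hF : F ∈ 𝓕) :
    BZFop (BZFop (i, j, F) (j, i, F)) (i, j, F) = (i, j, F) ∧
    BZFop (BZFop (j, i, F) (i, j, F)) (j, i, F) = (j, i, F) ∧
    ∀ y : ℤ × ℤ × Set ℕ, y.2.2 ∈ 𝓕 →
      BZFop (BZFop (i, j, F) y) (i, j, F) = (i, j, F) →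
      BZFop (BZFop y (i, j, F)) y = y →
      y = (j, i, F) :=
  stmt9_general 𝓕 i j F
end

section
/- Let 𝓕 be an ω-closed family of nonempty inductive subsets of ω with [0) ∈ 𝓕, and fix k ∈ ℤ. Then the set {(i,j,[p)) ∈ B_ℤ^𝓕 : i ≥ k and j ≥ k} equals (k,k,[0))·B_ℤ^𝓕 ∩ B_ℤ^𝓕·(k,k,[0)), and it is a subsemigroup of B_ℤ^𝓕. -/
/-! The element `(k, k, [0))` is a left identity on `{i ≥ k}` and a right identity on `{j ≥ k}`,
and in a product `(i₁, j₁, F₁)·(i₂, j₂, F₂)` the integer coordinates are `i₁ - j₁ + max j₁ i₂` and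
`j₂ - i₂ + max j₁ i₂`; so both sides of the set equality, and products of elements with
`i, j ≥ k`, have coordinates `≥ k`. The set coordinate of any product is
`(-n + F₁) ∩ (-m + F₂)` with `n = 0` or `m = 0`, which lies in `𝓕` by ω-closedness. -/

@[simp]
lemma negShift_zero (F : Set ℕ) : negShift 0 F = F := rfl

lemma zshift_eq_negShift {m : ℤ} (hm : m ≤ 0) (F : Set ℕ) :
    zshift m F = negShift (-m).toNat F := by
  ext x
  simp only [zshift, negShift, Set.mem_ofPred_eq]
  constructor
  · rintro ⟨c, hc, hx⟩
    rwa [show x + (-m).toNat = c by omega]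
  · exact fun h ↦ ⟨x + (-m).toNat, h, by omega⟩

lemma BZFop_fst_s10 (a b : ℤ × ℤ × Set ℕ) :
    (BZFop a b).1 = a.1 - a.2.1 + max a.2.1 b.1 := by
  unfold BZFop
  split_ifs with h
  · simp only [max_eq_right h]
  · simp only [max_eq_left (le_of_not_ge h)]
    ring

lemma BZFop_snd_fst_s10 (a b : ℤ × ℤ × Set ℕ) :
    (BZFop a b).2.1 = b.2.1 - b.1 + max a.2.1 b.1 := by
  unfold BZFop
  split_ifs with h
  · simp only [max_eq_right h]
    ring
  · simp only [max_eq_left (le_of_not_ge h)]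
    ring

lemma BZFop_snd_snd (a b : ℤ × ℤ × Set ℕ) :
    (BZFop a b).2.2 = negShift (b.1 - a.2.1).toNat a.2.2 ∩ negShift (a.2.1 - b.1).toNat b.2.2 := by
  unfold BZFop
  split_ifs with h
  · rw [zshift_eq_negShift (by omega), show (a.2.1 - b.1).toNat = 0 by omega, negShift_zero,
      neg_sub]
  · rw [zshift_eq_negShift (by omega), show (b.1 - a.2.1).toNat = 0 by omega, negShift_zero,
      neg_sub]

lemma inter_negShift_mem {𝓕 : Set (Set ℕ)} (hcl : OmegaClosed 𝓕) {F G : Set ℕ} (hF : F ∈ 𝓕)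
    (hG : G ∈ 𝓕) {m n : ℕ} (hmn : m = 0 ∨ n = 0) : negShift m F ∩ negShift n G ∈ 𝓕 := by
  rcases hmn with rfl | rfl
  · exact hcl n F hF G hG
  · rw [Set.inter_comm]
    exact hcl m G hG F hF

lemma BZFop_snd_snd_mem {𝓕 : Set (Set ℕ)} (hcl : OmegaClosed 𝓕) {a b : ℤ × ℤ × Set ℕ}
    (ha : a.2.2 ∈ 𝓕) (hb : b.2.2 ∈ 𝓕) : (BZFop a b).2.2 ∈ 𝓕 := by
  rw [BZFop_snd_snd]
  exact inter_negShift_mem hcl ha hb (by omega)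

lemma BZFop_Ici_zero_left {k : ℤ} {a : ℤ × ℤ × Set ℕ} (hk : k ≤ a.1) :
    BZFop (k, k, Set.Ici 0) a = a := by
  refine Prod.ext ?_ (Prod.ext ?_ ?_)
  · rw [BZFop_fst_s10]; simp only [max_eq_right hk]; ring
  · rw [BZFop_snd_fst_s10]; simp only [max_eq_right hk]; ring
  · rw [BZFop_snd_snd, show (k - a.1).toNat = 0 by omega]
    simp [negShift]

lemma BZFop_Ici_zero_right {k : ℤ} {a : ℤ × ℤ × Set ℕ} (hk : k ≤ a.2.1) :
    BZFop a (k, k, Set.Ici 0) = a := by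
  refine Prod.ext ?_ (Prod.ext ?_ ?_)
  · rw [BZFop_fst_s10]; simp only [max_eq_left hk]; ring
  · rw [BZFop_snd_fst_s10]; simp only [max_eq_left hk]; ring
  · rw [BZFop_snd_snd, show (k - a.2.1).toNat = 0 by omega]
    simp [negShift]

theorem stmt10_general (𝓕 : Set (Set ℕ)) (hcl : OmegaClosed 𝓕)
    (h0 : Set.Ici (0 : ℕ) ∈ 𝓕) (k : ℤ) :
    ({a : ℤ × ℤ × Set ℕ | a.2.2 ∈ 𝓕 ∧ k ≤ a.1 ∧ k ≤ a.2.1} =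
      {x : ℤ × ℤ × Set ℕ |
          ∃ t : ℤ × ℤ × Set ℕ, t.2.2 ∈ 𝓕 ∧ x = BZFop (k, k, Set.Ici 0) t} ∩
      {x : ℤ × ℤ × Set ℕ |
          ∃ t : ℤ × ℤ × Set ℕ, t.2.2 ∈ 𝓕 ∧ x = BZFop t (k, k, Set.Ici 0)}) ∧
    ∀ a b : ℤ × ℤ × Set ℕ,
      a ∈ {a : ℤ × ℤ × Set ℕ | a.2.2 ∈ 𝓕 ∧ k ≤ a.1 ∧ k ≤ a.2.1} →
      b ∈ {a : ℤ × ℤ × Set ℕ | a.2.2 ∈ 𝓕 ∧ k ≤ a.1 ∧ k ≤ a.2.1} →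
      BZFop a b ∈ {a : ℤ × ℤ × Set ℕ | a.2.2 ∈ 𝓕 ∧ k ≤ a.1 ∧ k ≤ a.2.1} := by
  refine ⟨?_, ?_⟩
  · ext x
    constructor
    · rintro ⟨hx, hi, hj⟩
      exact ⟨⟨x, hx, (BZFop_Ici_zero_left hi).symm⟩, ⟨x, hx, (BZFop_Ici_zero_right hj).symm⟩⟩
    · rintro ⟨⟨t, ht, rfl⟩, ⟨s, -, hs⟩⟩
      refine ⟨BZFop_snd_snd_mem hcl h0 ht, ?_, ?_⟩
      · rw [BZFop_fst_s10]
        simp only [sub_self, zero_add, le_max_left]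
      · rw [hs, BZFop_snd_fst_s10]
        simp only [sub_self, zero_add, le_max_right]
  · rintro a b ⟨ha, hai, haj⟩ ⟨hb, hbi, hbj⟩
    refine ⟨BZFop_snd_snd_mem hcl ha hb, ?_, ?_⟩
    · rw [BZFop_fst_s10]; omega
    · rw [BZFop_snd_fst_s10]; omega

/-- For `[0) ∈ 𝓕` and `k : ℤ`, the set `{(i,j,F) : i ≥ k, j ≥ k}`
equals `(k,k,[0))·B_ℤ^𝓕 ∩ B_ℤ^𝓕·(k,k,[0))` and is a subsemigroup. -/
theorem stmt10 (𝓕 : Set (Set ℕ)) (hcl : OmegaClosed 𝓕)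
    (hmem : ∀ F ∈ 𝓕, F.Nonempty ∧ SInd F)
    (h0 : Set.Ici (0 : ℕ) ∈ 𝓕) (k : ℤ) :
    ({a : ℤ × ℤ × Set ℕ | a.2.2 ∈ 𝓕 ∧ k ≤ a.1 ∧ k ≤ a.2.1} =
      {x : ℤ × ℤ × Set ℕ |
          ∃ t : ℤ × ℤ × Set ℕ, t.2.2 ∈ 𝓕 ∧ x = BZFop (k, k, Set.Ici 0) t} ∩
      {x : ℤ × ℤ × Set ℕ |
          ∃ t : ℤ × ℤ × Set ℕ, t.2.2 ∈ 𝓕 ∧ x = BZFop t (k, k, Set.Ici 0)}) ∧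
    ∀ a b : ℤ × ℤ × Set ℕ,
      a ∈ {a : ℤ × ℤ × Set ℕ | a.2.2 ∈ 𝓕 ∧ k ≤ a.1 ∧ k ≤ a.2.1} →
      b ∈ {a : ℤ × ℤ × Set ℕ | a.2.2 ∈ 𝓕 ∧ k ≤ a.1 ∧ k ≤ a.2.1} →
      BZFop a b ∈ {a : ℤ × ℤ × Set ℕ | a.2.2 ∈ 𝓕 ∧ k ≤ a.1 ∧ k ≤ a.2.1} :=
  stmt10_general 𝓕 hcl h0 k
end

section
/- Let 𝓕 be an ω-closed family of nonempty inductive subsets of ω containing [0). Every automorphism a of the semigroup B_ℤ^𝓕 satisfying a(0,0,[0)) = (0,0,[0)) is the identity map. -/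
lemma Int.eq_self_of_surjective_of_add_one {t : ℤ → ℤ} (ht : Function.Surjective t)
    (h_one : 0 ≤ t 1) (h_add : ∀ m, t (1 + m) = t 1 + t m) (m : ℤ) : t m = m := by
  have h_mul (m : ℤ) : t m = m * t 1 := by
    induction m using Int.induction_on with
    | zero => simpa using h_add 0
    | succ n ih => rw [add_comm, h_add, ih]; ring
    | pred n ih =>
      have h := h_add (-n - 1)
      rw [show 1 + (-(n : ℤ) - 1) = -n by ring, ih] at h
      linear_combination -h
  obtain ⟨k, hk⟩ := ht 1
  rw [h_mul] at hk
  rw [h_mul, Int.eq_one_of_mul_eq_one_left h_one hk, mul_one]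

namespace BZF

def bz (i j : ℤ) (p : ℕ) : ℤ × ℤ × Set ℕ := (i, j, Set.Ici p)

@[simp] lemma bz_inj {i j i' j' : ℤ} {p p' : ℕ} :
    bz i j p = bz i' j' p' ↔ i = i' ∧ j = j' ∧ p = p' := by
  simp [bz, Set.Ici_inj]

lemma zshift_Ici (m : ℤ) (p : ℕ) : zshift m (Set.Ici p) = Set.Ici (m + p).toNat := by
  ext x
  simp only [zshift, Set.mem_Ici, Set.mem_ofPred_eq]
  constructor
  · rintro ⟨k, hk, hx⟩
    omega
  · intro hx
    exact ⟨(x - m).toNat, by omega, by omega⟩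

lemma zshift_eq_negShift {m : ℤ} (hm : m ≤ 0) (F : Set ℕ) :
    zshift m F = negShift (-m).toNat F := by
  ext x
  simp only [zshift, negShift, Set.mem_ofPred_eq]
  constructor
  · rintro ⟨k, hk, hx⟩
    rwa [show x + (-m).toNat = k by omega]
  · intro hx
    exact ⟨x + (-m).toNat, hx, by omega⟩

lemma BZFop_bz_of_le {i j k l : ℤ} {p q : ℕ} (h : j ≤ k) :
    BZFop (bz i j p) (bz k l q) = bz (i - j + k) l (max (j - k + p).toNat q) := by
  simp only [bz, BZFop, if_pos h, zshift_Ici, Set.Ici_inter_Ici]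

lemma BZFop_bz_of_lt {i j k l : ℤ} {p q : ℕ} (h : k < j) :
    BZFop (bz i j p) (bz k l q) = bz i (j - k + l) (max p (k - j + q).toNat) := by
  simp only [bz, BZFop, if_neg (not_le.mpr h), zshift_Ici, Set.Ici_inter_Ici]

lemma BZFop_mem {𝓕 : Set (Set ℕ)} (hcl : OmegaClosed 𝓕) {a b : ℤ × ℤ × Set ℕ}
    (ha : a.2.2 ∈ 𝓕) (hb : b.2.2 ∈ 𝓕) : (BZFop a b).2.2 ∈ 𝓕 := by
  unfold BZFop
  split_ifs with h
  · rw [zshift_eq_negShift (by omega), Set.inter_comm]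
    exact hcl _ _ hb _ ha
  · rw [zshift_eq_negShift (by omega)]
    exact hcl _ _ ha _ hb

lemma eq_Ici_sInf_of_sInd {F : Set ℕ} (hF : SInd F) (hne : F.Nonempty) :
    F = Set.Ici (sInf F) := by
  ext n
  refine ⟨fun hn => Nat.sInf_le hn, fun hn => ?_⟩
  exact Nat.le_induction (Nat.sInf_mem hne) (fun k _ hk => hF k hk) n hn

lemma exists_eq_bz {𝓕 : Set (Set ℕ)} (hmem : ∀ F ∈ 𝓕, F.Nonempty ∧ SInd F)
    {a : ℤ × ℤ × Set ℕ} (ha : a.2.2 ∈ 𝓕) : ∃ i j p, a = bz i j p := by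
  obtain ⟨i, j, F⟩ := a
  exact ⟨i, j, sInf F, by rw [bz, ← eq_Ici_sInf_of_sInd (hmem F ha).2 (hmem F ha).1]⟩

def IsInversePair (x y : ℤ × ℤ × Set ℕ) : Prop :=
  BZFop x y = bz 0 0 0 ∧ BZFop (bz 0 0 0) x = x ∧ BZFop y (bz 0 0 0) = y

lemma isInversePair_iff {𝓕 : Set (Set ℕ)} (hmem : ∀ F ∈ 𝓕, F.Nonempty ∧ SInd F)
    {x y : ℤ × ℤ × Set ℕ} (hx : x.2.2 ∈ 𝓕) (hy : y.2.2 ∈ 𝓕) :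
    IsInversePair x y ↔ ∃ m, x = bz 0 m 0 ∧ y = bz m 0 0 := by
  obtain ⟨k, l, g, rfl⟩ := exists_eq_bz hmem hx
  obtain ⟨k', l', g', rfl⟩ := exists_eq_bz hmem hy
  constructor
  · rintro ⟨hxy, hex, hye⟩
    have hk : 0 ≤ k := by
      by_contra! hk
      rw [BZFop_bz_of_lt hk, bz_inj] at hex
      omega
    have hl' : 0 ≤ l' := by
      by_contra! hl'
      rw [BZFop_bz_of_le hl'.le, bz_inj] at hye
      omega
    rcases le_or_gt l k' with hlk | hlk
    · rw [BZFop_bz_of_le hlk, bz_inj] at hxy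
      exact ⟨l, bz_inj.2 ⟨by omega, rfl, by omega⟩, bz_inj.2 ⟨by omega, by omega, by omega⟩⟩
    · rw [BZFop_bz_of_lt hlk, bz_inj] at hxy
      omega
  · rintro ⟨m, hx, hy⟩
    simp only [bz_inj] at hx hy
    obtain ⟨rfl, rfl, rfl⟩ := hx
    obtain ⟨rfl, rfl, rfl⟩ := hy
    refine ⟨?_, ?_, ?_⟩ <;> rw [BZFop_bz_of_le (by omega), bz_inj] <;> omega

lemma BZFop_bz_zero_eq_self_iff (m : ℤ) : BZFop (bz 0 m 0) (bz 0 0 0) = bz 0 m 0 ↔ 0 ≤ m := by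
  rcases le_or_gt m 0 with hm | hm
  · rw [BZFop_bz_of_le hm, bz_inj]
    omega
  · rw [BZFop_bz_of_lt hm, bz_inj]
    omega

lemma BZFop_bz_zero_of_nonneg {a : ℤ} (ha : 0 ≤ a) (b : ℤ) :
    BZFop (bz 0 a 0) (bz 0 b 0) = bz 0 (a + b) 0 := by
  rcases ha.eq_or_lt with rfl | ha
  · rw [BZFop_bz_of_le le_rfl, bz_inj]
    omega
  · rw [BZFop_bz_of_lt ha, bz_inj]
    omega

lemma BZFop_bz_zero_bz_zero (i j : ℤ) : BZFop (bz i 0 0) (bz 0 j 0) = bz i j 0 := by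
  rw [BZFop_bz_of_le le_rfl, bz_inj]
  omega

lemma BZFop_bz_diag_eq_self_iff (i j m : ℤ) (p : ℕ) :
    BZFop (bz i j p) (bz m m 0) = bz i j p ↔ m ≤ j := by
  rcases le_or_gt j m with h | h
  · rw [BZFop_bz_of_le h, bz_inj]
    omega
  · rw [BZFop_bz_of_lt h, bz_inj]
    omega

lemma BZFop_diag_bz_eq_self_iff (i j m : ℤ) (p : ℕ) :
    BZFop (bz m m 0) (bz i j p) = bz i j p ↔ m ≤ i := by
  rcases le_or_gt m i with h | h
  · rw [BZFop_bz_of_le h, bz_inj]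
    omega
  · rw [BZFop_bz_of_lt h, bz_inj]
    omega

lemma BZFop_bz_diag_eq_bz_zero_iff (i j m : ℤ) (p : ℕ) :
    BZFop (bz i j p) (bz m m 0) = bz (i - j + m) m 0 ↔ j + p ≤ m := by
  rcases le_or_gt j m with h | h
  · rw [BZFop_bz_of_le h, bz_inj]
    omega
  · rw [BZFop_bz_of_lt h, bz_inj]
    omega

def IsBZFHomOn (𝓕 : Set (Set ℕ)) (φ : ℤ × ℤ × Set ℕ → ℤ × ℤ × Set ℕ) : Prop :=
  ∀ a b : ℤ × ℤ × Set ℕ, a.2.2 ∈ 𝓕 → b.2.2 ∈ 𝓕 → φ (BZFop a b) = BZFop (φ a) (φ b)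

section Hom

variable {𝓕 : Set (Set ℕ)} {φ : ℤ × ℤ × Set ℕ → ℤ × ℤ × Set ℕ}

lemma map_BZFop_eq_map_iff (hcl : OmegaClosed 𝓕) (hinj : Set.InjOn φ {a | a.2.2 ∈ 𝓕})
    (hhom : IsBZFHomOn 𝓕 φ) {x y u : ℤ × ℤ × Set ℕ} (hx : x.2.2 ∈ 𝓕) (hy : y.2.2 ∈ 𝓕) (hu : u.2.2 ∈ 𝓕) :
    BZFop (φ x) (φ y) = φ u ↔ BZFop x y = u := by
  rw [← hhom x y hx hy]
  exact hinj.eq_iff (BZFop_mem hcl hx hy) hu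

lemma isInversePair_map_iff (hcl : OmegaClosed 𝓕) (h0 : Set.Ici (0 : ℕ) ∈ 𝓕)
    (hinj : Set.InjOn φ {a | a.2.2 ∈ 𝓕}) (hhom : IsBZFHomOn 𝓕 φ)
    (hfix : φ (bz 0 0 0) = bz 0 0 0)
    {x y : ℤ × ℤ × Set ℕ} (hx : x.2.2 ∈ 𝓕) (hy : y.2.2 ∈ 𝓕) :
    IsInversePair (φ x) (φ y) ↔ IsInversePair x y := by
  have he : (bz 0 0 0).2.2 ∈ 𝓕 := h0
  unfold IsInversePair
  conv_lhs => rw [← hfix]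
  rw [map_BZFop_eq_map_iff hcl hinj hhom hx hy he, map_BZFop_eq_map_iff hcl hinj hhom he hx hx,
    map_BZFop_eq_map_iff hcl hinj hhom hy he hy]

lemma exists_surjective_map_bz_zero (hcl : OmegaClosed 𝓕)
    (hmem : ∀ F ∈ 𝓕, F.Nonempty ∧ SInd F) (h0 : Set.Ici (0 : ℕ) ∈ 𝓕)
    (hbij : Set.BijOn φ {a | a.2.2 ∈ 𝓕} {a | a.2.2 ∈ 𝓕})
    (hhom : IsBZFHomOn 𝓕 φ) (hfix : φ (bz 0 0 0) = bz 0 0 0) :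
    ∃ t : ℤ → ℤ, Function.Surjective t ∧
      ∀ m, φ (bz 0 m 0) = bz 0 (t m) 0 ∧ φ (bz m 0 0) = bz (t m) 0 0 := by
  have hpair (m : ℤ) : IsInversePair (bz 0 m 0) (bz m 0 0) :=
    (isInversePair_iff hmem h0 h0).2 ⟨m, rfl, rfl⟩
  have hmap {x y : ℤ × ℤ × Set ℕ} (hx : x.2.2 ∈ 𝓕) (hy : y.2.2 ∈ 𝓕) :=
    isInversePair_map_iff hcl h0 hbij.injOn hhom hfix hx hy
  choose t ht using fun m =>
    (isInversePair_iff hmem (hbij.mapsTo h0) (hbij.mapsTo h0)).1 ((hmap h0 h0).2 (hpair m))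
  refine ⟨t, fun n => ?_, ht⟩
  obtain ⟨u, hu, hφu⟩ := hbij.surjOn (show (bz 0 n 0).2.2 ∈ 𝓕 from h0)
  obtain ⟨v, hv, hφv⟩ := hbij.surjOn (show (bz n 0 0).2.2 ∈ 𝓕 from h0)
  have huv : IsInversePair u v := (hmap hu hv).1 (hφu ▸ hφv ▸ hpair n)
  obtain ⟨m, rfl, -⟩ := (isInversePair_iff hmem hu hv).1 huv
  have htm := (ht m).1
  rw [hφu, bz_inj] at htm
  exact ⟨m, htm.2.1.symm⟩

lemma map_bz_zero (hcl : OmegaClosed 𝓕)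
    (hmem : ∀ F ∈ 𝓕, F.Nonempty ∧ SInd F) (h0 : Set.Ici (0 : ℕ) ∈ 𝓕)
    (hbij : Set.BijOn φ {a | a.2.2 ∈ 𝓕} {a | a.2.2 ∈ 𝓕})
    (hhom : IsBZFHomOn 𝓕 φ) (hfix : φ (bz 0 0 0) = bz 0 0 0) (i j : ℤ) :
    φ (bz i j 0) = bz i j 0 := by
  obtain ⟨t, ht_surj, ht⟩ := exists_surjective_map_bz_zero hcl hmem h0 hbij hhom hfix
  have ht_one_nonneg : 0 ≤ t 1 := by
    have h := map_BZFop_eq_map_iff (x := bz 0 1 0) (y := bz 0 0 0) (u := bz 0 1 0)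
      hcl hbij.injOn hhom h0 h0 h0
    rw [(ht 1).1, hfix, BZFop_bz_zero_eq_self_iff, BZFop_bz_zero_eq_self_iff] at h
    exact h.2 zero_le_one
  have ht_add (m : ℤ) : t (1 + m) = t 1 + t m := by
    have h := hhom (bz 0 1 0) (bz 0 m 0) h0 h0
    rw [BZFop_bz_zero_of_nonneg zero_le_one, (ht _).1, (ht _).1, (ht _).1,
      BZFop_bz_zero_of_nonneg ht_one_nonneg, bz_inj] at h
    exact h.2.1
  have ht_id := Int.eq_self_of_surjective_of_add_one ht_surj ht_one_nonneg ht_add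
  rw [← BZFop_bz_zero_bz_zero, hhom _ _ h0 h0, (ht i).2, (ht j).1, ht_id, ht_id]

lemma map_bz (hcl : OmegaClosed 𝓕) (hmem : ∀ F ∈ 𝓕, F.Nonempty ∧ SInd F)
    (h0 : Set.Ici (0 : ℕ) ∈ 𝓕) (hbij : Set.BijOn φ {a | a.2.2 ∈ 𝓕} {a | a.2.2 ∈ 𝓕})
    (hhom : IsBZFHomOn 𝓕 φ)
    (hfix₀ : ∀ i j, φ (bz i j 0) = bz i j 0) {i j : ℤ} {p : ℕ} (hp : Set.Ici p ∈ 𝓕) :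
    φ (bz i j p) = bz i j p := by
  have hx : (bz i j p).2.2 ∈ 𝓕 := hp
  have hbz₀ (k l : ℤ) : (bz k l 0).2.2 ∈ 𝓕 := h0
  obtain ⟨i', j', p', hφx⟩ := exists_eq_bz hmem (hbij.mapsTo hx)
  have hreflect {y u : ℤ × ℤ × Set ℕ} (hy : y.2.2 ∈ 𝓕) (hu : u.2.2 ∈ 𝓕) :=
    map_BZFop_eq_map_iff (x := bz i j p) hcl hbij.injOn hhom hx hy hu
  have hi : i' = i := eq_of_forall_le_iff fun m => by
    have h := map_BZFop_eq_map_iff hcl hbij.injOn hhom (hbz₀ m m) hx hx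
    rwa [hφx, hfix₀, BZFop_diag_bz_eq_self_iff, BZFop_diag_bz_eq_self_iff] at h
  have hj : j' = j := eq_of_forall_le_iff fun m => by
    have h := hreflect (hbz₀ m m) hx
    rwa [hφx, hfix₀, BZFop_bz_diag_eq_self_iff, BZFop_bz_diag_eq_self_iff] at h
  subst i' j'
  have hp' : (j + p' : ℤ) = j + p := eq_of_forall_ge_iff fun m => by
    have h := hreflect (hbz₀ m m) (hbz₀ (i - j + m) m)
    rwa [hφx, hfix₀, hfix₀, BZFop_bz_diag_eq_bz_zero_iff, BZFop_bz_diag_eq_bz_zero_iff] at h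
  rw [hφx, bz_inj]
  omega

end Hom

end BZF

open BZF in
/-- Every `(0,0,[0))`-automorphism of the semigroup `B_ℤ^𝓕` is the
identity map. -/
theorem stmt16 (𝓕 : Set (Set ℕ)) (hcl : OmegaClosed 𝓕)
    (hmem : ∀ F ∈ 𝓕, F.Nonempty ∧ SInd F) (h0 : Set.Ici (0 : ℕ) ∈ 𝓕)
    (φ : ℤ × ℤ × Set ℕ → ℤ × ℤ × Set ℕ)
    (hbij : Set.BijOn φ {a : ℤ × ℤ × Set ℕ | a.2.2 ∈ 𝓕}
      {a : ℤ × ℤ × Set ℕ | a.2.2 ∈ 𝓕})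
    (hhom : ∀ a b : ℤ × ℤ × Set ℕ, a.2.2 ∈ 𝓕 → b.2.2 ∈ 𝓕 →
      φ (BZFop a b) = BZFop (φ a) (φ b))
    (hfix : φ ((0 : ℤ), (0 : ℤ), Set.Ici (0 : ℕ)) =
      ((0 : ℤ), (0 : ℤ), Set.Ici (0 : ℕ))) :
    ∀ a : ℤ × ℤ × Set ℕ, a.2.2 ∈ 𝓕 → φ a = a := by
  intro a ha
  obtain ⟨i, j, p, rfl⟩ := exists_eq_bz hmem ha
  exact map_bz hcl hmem h0 hbij hhom (map_bz_zero hcl hmem h0 hbij hhom hfix) ha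
end

section
/- Fix a positive integer k and let 𝓕 = {[0), [1), ..., [k)}. The map ã : B_ℤ^𝓕 → B_ℤ^𝓕 defined by ã(i,j,[s)) = (i+s, j+s, [k−s)) for s = 0, 1, ..., k and i, j ∈ ℤ is an automorphism of the semigroup B_ℤ^𝓕. -/
/-- The map `ã : (i,j,[s)) ↦ (i+s, j+s, [k-s))` on `B_ℤ^𝓕` for
`𝓕 = {[0),…,[k)}` (here `sInf F` recovers `s` from `F = [s)`). -/
noncomputable def taMap (k : ℕ) (a : ℤ × ℤ × Set ℕ) : ℤ × ℤ × Set ℕ :=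
  (a.1 + ((sInf a.2.2 : ℕ) : ℤ), a.2.1 + ((sInf a.2.2 : ℕ) : ℤ),
    Set.Ici (k - sInf a.2.2))

/-!
Write `(i, j, s)` for `(i, j, [s))`. With `m = max j₁ i₂`, both branches of the product are
`(i₁ + m - j₁, j₂ + m - i₂, max (s₁ + j₁) (s₂ + i₂) - m)`. On the images under `ã` the role of `m`
is played by `M = max (j₁ + s₁) (i₂ + s₂)`, and `ã` sends the last entry `M - m` of the product to
`k - (M - m)`, which is what the product of the images has there; so `ã` is multiplicative.
Moreover `ã ∘ ã` is the translation `(i, j, s) ↦ (i + k, j + k, s)`, so `ã` is a bijection.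
-/

open Set

def BZFset (k : ℕ) : Set (ℤ × ℤ × Set ℕ) := {a | ∃ s ≤ k, a.2.2 = Ici s}

lemma zshift_Ici (m : ℤ) (s : ℕ) : zshift m (Ici s) = Ici (m + s).toNat := by
  ext x
  simp only [zshift, mem_Ici]
  constructor
  · rintro ⟨c, hc, hx⟩
    omega
  · intro hx
    exact ⟨((x : ℤ) - m).toNat, by omega, by omega⟩

lemma BZFop_Ici (i₁ j₁ i₂ j₂ : ℤ) (s₁ s₂ : ℕ) :
    BZFop (i₁, j₁, Ici s₁) (i₂, j₂, Ici s₂) =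
      (i₁ + max j₁ i₂ - j₁, j₂ + max j₁ i₂ - i₂,
        Ici (max (s₁ + j₁) (s₂ + i₂) - max j₁ i₂).toNat) := by
  simp only [BZFop, zshift_Ici, Ici_inter_Ici]
  split_ifs <;> simp only [Prod.mk.injEq, Ici_inj] <;> omega

lemma taMap_Ici (k s : ℕ) (i j : ℤ) :
    taMap k (i, j, Ici s) = (i + s, j + s, Ici (k - s)) := by
  simp [taMap, csInf_Ici]

lemma taMap_taMap {k s : ℕ} (hs : s ≤ k) (i j : ℤ) :
    taMap k (taMap k (i, j, Ici s)) = (i + k, j + k, Ici s) := by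
  rw [taMap_Ici, taMap_Ici]
  simp only [Prod.mk.injEq, Ici_inj]
  omega

lemma mapsTo_taMap (k : ℕ) : MapsTo (taMap k) (BZFset k) (BZFset k) := by
  rintro ⟨i, j, _⟩ ⟨s, -, rfl⟩
  rw [taMap_Ici]
  exact ⟨k - s, Nat.sub_le k s, rfl⟩

lemma bijOn_taMap (k : ℕ) : BijOn (taMap k) (BZFset k) (BZFset k) := by
  let untranslate (a : ℤ × ℤ × Set ℕ) : ℤ × ℤ × Set ℕ := (a.1 - k, a.2.1 - k, a.2.2)
  have mapsTo_untranslate : MapsTo untranslate (BZFset k) (BZFset k) := fun _ ha => ha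
  refine InvOn.bijOn (f' := untranslate ∘ taMap k) ⟨?_, ?_⟩ (mapsTo_taMap k)
    (mapsTo_untranslate.comp (mapsTo_taMap k))
  · rintro ⟨i, j, _⟩ ⟨s, hs, rfl⟩
    simp only [Function.comp_apply, taMap_taMap hs, untranslate, add_sub_cancel_right]
  · rintro ⟨i, j, _⟩ ⟨s, hs, rfl⟩
    simp only [Function.comp_apply, untranslate, taMap_Ici, Prod.mk.injEq, Ici_inj]
    omega

lemma taMap_BZFop {k : ℕ} {a b : ℤ × ℤ × Set ℕ} (ha : a ∈ BZFset k) (hb : b ∈ BZFset k) :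
    taMap k (BZFop a b) = BZFop (taMap k a) (taMap k b) := by
  obtain ⟨i₁, j₁, _⟩ := a
  obtain ⟨i₂, j₂, _⟩ := b
  obtain ⟨s₁, hs₁, rfl⟩ := ha
  obtain ⟨s₂, hs₂, rfl⟩ := hb
  rw [BZFop_Ici, taMap_Ici, taMap_Ici, taMap_Ici, BZFop_Ici]
  simp only [Prod.mk.injEq, Ici_inj]
  omega

theorem stmt17_general (k : ℕ) :
    Set.BijOn (taMap k) {a : ℤ × ℤ × Set ℕ | ∃ s ≤ k, a.2.2 = Set.Ici s}
      {a : ℤ × ℤ × Set ℕ | ∃ s ≤ k, a.2.2 = Set.Ici s} ∧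
    ∀ a b : ℤ × ℤ × Set ℕ,
      (∃ s ≤ k, a.2.2 = Set.Ici s) → (∃ s ≤ k, b.2.2 = Set.Ici s) →
      taMap k (BZFop a b) = BZFop (taMap k a) (taMap k b) :=
  ⟨bijOn_taMap k, fun _ _ ha hb => taMap_BZFop ha hb⟩

/-- For `𝓕 = {[0),…,[k)}`, the map `ã(i,j,[s)) = (i+s, j+s, [k−s))` is an
automorphism of the semigroup `B_ℤ^𝓕`. -/
theorem stmt17 (k : ℕ) (hk : 0 < k) :
    Set.BijOn (taMap k) {a : ℤ × ℤ × Set ℕ | ∃ s ≤ k, a.2.2 = Set.Ici s}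
      {a : ℤ × ℤ × Set ℕ | ∃ s ≤ k, a.2.2 = Set.Ici s} ∧
    ∀ a b : ℤ × ℤ × Set ℕ,
      (∃ s ≤ k, a.2.2 = Set.Ici s) → (∃ s ≤ k, b.2.2 = Set.Ici s) →
      taMap k (BZFop a b) = BZFop (taMap k a) (taMap k b) :=
  stmt17_general k
end
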